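/- The fundamental group of the tricosm, G = ⟨X, Y, Z | [X,Y] = 1, Z⁻¹XZ = Y, Z⁻¹YZ = (XY)⁻¹⟩, admits exactly one surjective homomorphism onto Z/2, and its kernel, the index-2 subgroup ⟨X, Y, Z²⟩, is isomorphic to G. -/

import Mathlib

/-- Relators of the fundamental group of the tricosm `c3`:
generators `X = of 0`, `Y = of 1`, `Z = of 2`, relations
`[X,Y] = 1`, `Z⁻¹XZ = Y`, `Z⁻¹YZ = (XY)⁻¹`. -/
def c3Rels : Set (FreeGroup (Fin 3)) :=
  { (FreeGroup.of 0)⁻¹ * (FreeGroup.of 1)⁻¹ * FreeGroup.of 0 * FreeGroup.of 1,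
    (FreeGroup.of 2)⁻¹ * FreeGroup.of 0 * FreeGroup.of 2 * (FreeGroup.of 1)⁻¹,
    (FreeGroup.of 2)⁻¹ * FreeGroup.of 1 * FreeGroup.of 2 *
      (FreeGroup.of 0 * FreeGroup.of 1) }

namespace C3
open Multiplicative SemidirectProduct

/-! ### The concrete model `ℤ² ⋊ ℤ` -/

def Madd : (ℤ × ℤ) ≃+ (ℤ × ℤ) where
  toFun p := (p.2 - p.1, -p.1)
  invFun p := (-p.2, p.1 - p.2)
  left_inv p := by ext <;> simp
  right_inv p := by ext <;> simp
  map_add' p q := by ext <;> simp <;> ring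

abbrev Nn : Type := Multiplicative (ℤ × ℤ)
def M : MulAut Nn := AddEquiv.toMultiplicative Madd
def S : MulAut Nn := AddEquiv.toMultiplicative (AddEquiv.prodComm)

lemma M_apply (p : ℤ × ℤ) : M (ofAdd p) = ofAdd (p.2 - p.1, -p.1) := rfl
lemma Minv_apply (p : ℤ × ℤ) : M⁻¹ (ofAdd p) = ofAdd (-p.2, p.1 - p.2) := rfl
lemma S_apply (p : ℤ × ℤ) : S (ofAdd p) = ofAdd (p.2, p.1) := rfl

lemma M_pow3 : M ^ (3:ℤ) = 1 := by
  refine MulEquiv.ext fun x => ?_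
  show M (M (M x)) = x
  rw [show x = ofAdd (toAdd x) from rfl, M_apply, M_apply, M_apply]
  congr 1
  ext <;> simp <;> omega

lemma S_mul_S : S * S = 1 := by
  refine MulEquiv.ext fun x => ?_
  show S (S x) = x
  rw [show x = ofAdd (toAdd x) from rfl, S_apply, S_apply]

lemma SMS : S * M * S = M⁻¹ := by
  have h : M * (S * M * S) = 1 := by
    refine MulEquiv.ext fun x => ?_
    show M (S (M (S x))) = x
    rw [show x = ofAdd (toAdd x) from rfl, S_apply, M_apply, S_apply, M_apply]
    congr 1
    ext <;> simp
  exact eq_inv_of_mul_eq_one_right h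

lemma S_M_zpow (t : ℤ) : S * M ^ t = M ^ (2 * t) * S := by
  have hS : S⁻¹ = S := by
    rw [inv_eq_iff_mul_eq_one, S_mul_S]
  have h1 : S * M ^ t * S⁻¹ = M ^ (-t) := by
    rw [← conj_zpow, hS, SMS, inv_zpow, ← zpow_neg]
  have h2 : M ^ (2 * t) = M ^ (-t) := by
    have h3 : M ^ (3 * t) = 1 := by
      rw [zpow_mul, M_pow3, one_zpow]
    calc M ^ (2 * t) = M ^ (3 * t) * M ^ (-t) := by
          rw [← zpow_add]; ring_nf
      _ = M ^ (-t) := by rw [h3, one_mul]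
  calc S * M ^ t = (S * M ^ t * S⁻¹) * S := by group
    _ = M ^ (2 * t) * S := by rw [h1, h2]

abbrev φh : Multiplicative ℤ →* MulAut Nn := zpowersHom (MulAut Nn) M

abbrev Hh : Type := Nn ⋊[φh] Multiplicative ℤ

abbrev G : Type := PresentedGroup c3Rels

def Xg : G := PresentedGroup.of 0
def Yg : G := PresentedGroup.of 1
def Zg : G := PresentedGroup.of 2

/-! ### Relations in `G` -/

lemma rel_one {r : FreeGroup (Fin 3)} (h : r ∈ c3Rels) : PresentedGroup.mk c3Rels r = 1 :=
  (QuotientGroup.eq_one_iff _).mpr (Subgroup.subset_normalClosure h)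

lemma relXY : Xg * Yg = Yg * Xg := by
  have h := rel_one (show _ ∈ c3Rels from Set.mem_insert _ _)
  simp only [map_mul, map_inv] at h
  have h' : Xg⁻¹ * Yg⁻¹ * Xg * Yg = 1 := h
  calc Xg * Yg = (Yg * Xg) * (Xg⁻¹ * Yg⁻¹ * Xg * Yg) := by group
    _ = Yg * Xg := by rw [h', mul_one]

lemma relZX : Zg⁻¹ * Xg * Zg = Yg := by
  have h := rel_one (show _ ∈ c3Rels from
    Set.mem_insert_iff.mpr (Or.inr (Set.mem_insert _ _)))
  simp only [map_mul, map_inv] at h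
  have h' : Zg⁻¹ * Xg * Zg * Yg⁻¹ = 1 := h
  exact mul_inv_eq_one.mp h'

lemma relZY : Zg⁻¹ * Yg * Zg = (Xg * Yg)⁻¹ := by
  have h := rel_one (show _ ∈ c3Rels from
    Set.mem_insert_iff.mpr (Or.inr (Set.mem_insert_iff.mpr (Or.inr rfl))))
  simp only [map_mul, map_inv] at h
  have h' : Zg⁻¹ * Yg * Zg * (Xg * Yg) = 1 := h
  exact eq_inv_of_mul_eq_one_left h' 

end C3

namespace C3
open Multiplicative SemidirectProduct

/-! ### Conjugation by `Z` in `G` -/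

lemma commXY : Commute Xg Yg := relXY

lemma conjZ_Y : Zg * Yg * Zg⁻¹ = Xg := by
  rw [← relZX]; group

lemma conjZ_X : Zg * Xg * Zg⁻¹ = Xg⁻¹ * Yg⁻¹ := by
  have h : Zg * (Zg⁻¹ * Yg * Zg) * Zg⁻¹ = Zg * (Xg * Yg)⁻¹ * Zg⁻¹ := by rw [relZY]
  have h2 : Yg = Zg * Yg⁻¹ * Zg⁻¹ * (Zg * Xg⁻¹ * Zg⁻¹) := by
    calc Yg = Zg * (Zg⁻¹ * Yg * Zg) * Zg⁻¹ := by group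
      _ = Zg * (Xg * Yg)⁻¹ * Zg⁻¹ := h
      _ = Zg * Yg⁻¹ * Zg⁻¹ * (Zg * Xg⁻¹ * Zg⁻¹) := by rw [mul_inv_rev]; group
  have h3 : Zg * Yg⁻¹ * Zg⁻¹ = Xg⁻¹ := by
    rw [show Zg * Yg⁻¹ * Zg⁻¹ = (Zg * Yg * Zg⁻¹)⁻¹ by group, conjZ_Y]
  rw [h3] at h2
  have h4 : Zg * Xg⁻¹ * Zg⁻¹ = Xg * Yg := by
    calc Zg * Xg⁻¹ * Zg⁻¹ = Xg * (Xg⁻¹ * (Zg * Xg⁻¹ * Zg⁻¹)) := by group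
      _ = Xg * Yg := by rw [← h2]
  calc Zg * Xg * Zg⁻¹ = (Zg * Xg⁻¹ * Zg⁻¹)⁻¹ := by group
    _ = (Xg * Yg)⁻¹ := by rw [h4]
    _ = Xg⁻¹ * Yg⁻¹ := by rw [mul_inv_rev, (commXY.inv_inv).eq]

/-- `βN : ℤ² →* G`, `(a,b) ↦ X^a Y^b`. -/
def βN : Nn →* G where
  toFun p := Xg ^ (toAdd p).1 * Yg ^ (toAdd p).2
  map_one' := by simp
  map_mul' p q := by
    simp only [toAdd_mul, Prod.fst_add, Prod.snd_add]
    rw [zpow_add, zpow_add]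
    exact (commXY.zpow_zpow _ _).mul_mul_mul_comm _ _

lemma βN_apply (a b : ℤ) : βN (ofAdd (a, b)) = Xg ^ a * Yg ^ b := rfl

/-- Conjugation by `Z` realizes `M`. -/
lemma key0 (a b : ℤ) : βN (M (ofAdd (a, b))) = Zg * βN (ofAdd (a, b)) * Zg⁻¹ := by
  rw [M_apply, βN_apply, βN_apply]
  dsimp only
  have hconj : ∀ u w : G, Zg * (u * w) * Zg⁻¹ = (Zg * u * Zg⁻¹) * (Zg * w * Zg⁻¹) := by
    intro u w; group
  have hXa : Zg * Xg ^ a * Zg⁻¹ = (Xg⁻¹ * Yg⁻¹) ^ a := by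
    rw [← conjZ_X, ← conj_zpow]
  have hYb : Zg * Yg ^ b * Zg⁻¹ = Xg ^ b := by
    rw [← conjZ_Y, ← conj_zpow]
  rw [hconj, hXa, hYb]
  have hsplit : (Xg⁻¹ * Yg⁻¹) ^ a = Xg ^ (-a) * Yg ^ (-a) := by
    rw [(commXY.inv_inv).mul_zpow, inv_zpow', inv_zpow']
  rw [hsplit]
  symm
  calc Xg ^ (-a) * Yg ^ (-a) * Xg ^ b
      = Xg ^ (-a) * (Yg ^ (-a) * Xg ^ b) := by rw [mul_assoc]
    _ = Xg ^ (-a) * (Xg ^ b * Yg ^ (-a)) := by rw [(commXY.zpow_zpow b (-a)).eq]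
    _ = (Xg ^ (-a) * Xg ^ b) * Yg ^ (-a) := by rw [mul_assoc]
    _ = Xg ^ (b - a) * Yg ^ (-a) := by rw [← zpow_add, show -a + b = b - a from by ring]

lemma key (v : Nn) : βN (M v) = Zg * βN v * Zg⁻¹ :=
  key0 (toAdd v).1 (toAdd v).2

lemma M_Minv (v : Nn) : M (M⁻¹ v) = v := by
  rw [← MulAut.mul_apply, mul_inv_cancel, MulAut.one_apply]

lemma keyPow : ∀ (n : ℤ) (v : Nn), βN ((M ^ n) v) = Zg ^ n * βN v * Zg ^ (-n) := by
  have keyInv : ∀ v : Nn, βN (M⁻¹ v) = Zg⁻¹ * βN v * Zg := by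
    intro v
    have h := key (M⁻¹ v)
    rw [M_Minv] at h
    rw [h]; group
  intro n
  induction n using Int.induction_on with
  | zero => intro v; simp
  | succ k ih =>
      intro v
      have hM : (M ^ ((k : ℤ) + 1)) v = M ((M ^ (k : ℤ)) v) := by
        rw [show (k : ℤ) + 1 = 1 + k from by ring, zpow_add, zpow_one, MulAut.mul_apply]
      rw [hM, key, ih]
      group
  | pred k ih =>
      intro v
      have hM : (M ^ (-(k : ℤ) - 1)) v = M⁻¹ ((M ^ (-(k : ℤ))) v) := by
        rw [show -(k : ℤ) - 1 = -1 + -k from by ring, zpow_add, zpow_neg_one,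
          MulAut.mul_apply]
      rw [hM, keyInv, ih]
      group

abbrev βZ : Multiplicative ℤ →* G := zpowersHom G Zg

lemma βcompat : ∀ g : Multiplicative ℤ,
    βN.comp (φh g).toMonoidHom = (MulAut.conj (βZ g)).toMonoidHom.comp βN := by
  intro g
  refine MonoidHom.ext fun v => ?_
  show βN ((M ^ toAdd g) v) = Zg ^ toAdd g * βN v * (Zg ^ toAdd g)⁻¹
  rw [keyPow, zpow_neg]

/-- `β : H →* G`. -/
def β : Hh →* G := SemidirectProduct.lift βN βZ βcompat

end C3

namespace C3
open Multiplicative SemidirectProduct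

/-! ### The map `α : G →* H` -/

def gens : Fin 3 → Hh :=
  ![inl (ofAdd ((1 : ℤ), (0 : ℤ))), inl (ofAdd ((0 : ℤ), (1 : ℤ))), inr (ofAdd (1 : ℤ))]

lemma φh_ofAdd_one (v : Nn) : (φh (ofAdd (1 : ℤ))) v = M v := by
  show (M ^ (1:ℤ)) v = M v
  rw [zpow_one]

lemma φh_ofAdd_neg_one (v : Nn) : (φh (ofAdd (1 : ℤ))⁻¹) v = M⁻¹ v := by
  show (M ^ toAdd (ofAdd (1:ℤ))⁻¹) v = M⁻¹ v
  rw [show toAdd (ofAdd (1:ℤ))⁻¹ = -1 from rfl, zpow_neg_one]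

lemma gens_rels : ∀ r ∈ c3Rels, FreeGroup.lift gens r = 1 := by
  intro r hr
  simp only [c3Rels, Set.mem_insert_iff, Set.mem_singleton_iff] at hr
  rcases hr with rfl | rfl | rfl <;>
    · simp only [map_mul, map_inv, FreeGroup.lift_apply_of, gens, Matrix.cons_val_zero,
        Matrix.cons_val_one, Matrix.head_cons, Matrix.cons_val_two, Matrix.tail_cons]
      apply SemidirectProduct.ext <;>
        (simp [mul_left, mul_right, inv_left, inv_right, left_inl, right_inl, left_inr,
          right_inr, φh_ofAdd_one, φh_ofAdd_neg_one, M_apply, Minv_apply,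
          ← ofAdd_add, ← ofAdd_neg]
         try decide)

/-- `α : G →* H`. -/
def α : G →* Hh := PresentedGroup.toGroup gens_rels

lemma α_X : α Xg = inl (ofAdd ((1 : ℤ), (0 : ℤ))) := PresentedGroup.toGroup.of gens_rels
lemma α_Y : α Yg = inl (ofAdd ((0 : ℤ), (1 : ℤ))) := PresentedGroup.toGroup.of gens_rels
lemma α_Z : α Zg = inr (ofAdd (1 : ℤ)) := PresentedGroup.toGroup.of gens_rels

lemma β_α : β.comp α = MonoidHom.id G := by
  apply PresentedGroup.ext
  intro i
  fin_cases i
  · show β (α Xg) = Xg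
    rw [α_X, β, SemidirectProduct.lift_inl, βN_apply]
    simp
  · show β (α Yg) = Yg
    rw [α_Y, β, SemidirectProduct.lift_inl, βN_apply]
    simp
  · show β (α Zg) = Zg
    rw [α_Z, β, SemidirectProduct.lift_inr]
    show Zg ^ (1 : ℤ) = Zg
    rw [zpow_one]

lemma α_injective : Function.Injective α := by
  have h : ∀ x, β (α x) = x := fun x => by
    have := DFunLike.congr_fun β_α x
    simpa using this
  exact Function.LeftInverse.injective h

lemma α_XaYbZn (a b n : ℤ) :
    α (Xg ^ a * Yg ^ b * Zg ^ n) = ⟨ofAdd (a, b), ofAdd n⟩ := by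
  rw [map_mul, map_mul, map_zpow, map_zpow, map_zpow, α_X, α_Y, α_Z,
    ← map_zpow inl, ← map_zpow inl, ← map_zpow inr,
    ← ofAdd_zsmul, ← ofAdd_zsmul, ← ofAdd_zsmul,
    show a • ((1:ℤ),(0:ℤ)) = (a, 0) from by simp,
    show b • ((0:ℤ),(1:ℤ)) = (0, b) from by simp,
    show n • (1:ℤ) = n from by simp,
    ← map_mul inl, ← ofAdd_add,
    show (a,(0:ℤ)) + ((0:ℤ),b) = (a,b) from by simp,
    ← mk_eq_inl_mul_inr]

lemma α_surjective : Function.Surjective α := by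
  rintro ⟨v, g⟩
  refine ⟨Xg ^ (toAdd v).1 * Yg ^ (toAdd v).2 * Zg ^ (toAdd g), ?_⟩
  rw [α_XaYbZn]
  rfl

/-- The isomorphism `G ≃* H`. -/
noncomputable def e : G ≃* Hh := MulEquiv.ofBijective α ⟨α_injective, α_surjective⟩

end C3

namespace C3
open Multiplicative SemidirectProduct

/-! ### The projection to `ℤ/2` -/

def pr : Hh →* Multiplicative (ZMod 2) :=
  (AddMonoidHom.toMultiplicative (Int.castAddHom (ZMod 2))).comp rightHom

lemma pr_apply (x : Hh) : pr x = ofAdd ((toAdd x.right : ℤ) : ZMod 2) := rfl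

lemma pr_surjective : Function.Surjective pr := by
  intro c
  obtain ⟨t, ht⟩ := ZMod.intCast_surjective (n := 2) (toAdd c)
  exact ⟨inr (ofAdd t), by rw [pr_apply, right_inr, toAdd_ofAdd, ht, ofAdd_toAdd]⟩

noncomputable def f₀ : G →* Multiplicative (ZMod 2) := pr.comp α

lemma f₀_surjective : Function.Surjective f₀ :=
  pr_surjective.comp α_surjective

lemma f₀_X : f₀ Xg = 1 := by
  show pr (α Xg) = 1
  rw [α_X, pr_apply, right_inl]
  rfl

lemma f₀_Y : f₀ Yg = 1 := by
  show pr (α Yg) = 1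
  rw [α_Y, pr_apply, right_inl]
  rfl

lemma f₀_Z : f₀ Zg = ofAdd (1 : ZMod 2) := by
  show pr (α Zg) = ofAdd (1 : ZMod 2)
  rw [α_Z, pr_apply, right_inr]
  rfl

/-- Any surjective hom to `ℤ/2` equals `f₀`. -/
lemma uniq (f : G →* Multiplicative (ZMod 2)) (hf : Function.Surjective f) : f = f₀ := by
  -- the images of the generators
  have hZX := congrArg f relZX
  have hZY := congrArg f relZY
  simp only [map_mul, map_inv] at hZX hZY
  -- x = y from the second relation (the target is commutative)
  have hxy : f Xg = f Yg := by
    rw [mul_comm (f Zg)⁻¹ (f Xg), mul_assoc, inv_mul_cancel, mul_one] at hZX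
    exact hZX
  have hy : f Yg = (f Xg * f Yg)⁻¹ := by
    rw [mul_comm (f Zg)⁻¹ (f Yg), mul_assoc, inv_mul_cancel, mul_one] at hZY
    exact hZY
  have hkey : ∀ x y : Multiplicative (ZMod 2), x = y → y = (x * y)⁻¹ → x = 1 ∧ y = 1 := by
    decide
  obtain ⟨hx1, hy1⟩ := hkey _ _ hxy hy
  -- z must be the generator, else f is trivial
  have hz : f Zg = ofAdd (1 : ZMod 2) := by
    have halt : ∀ u : Multiplicative (ZMod 2), u = 1 ∨ u = ofAdd (1 : ZMod 2) := by decide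
    rcases halt (f Zg) with hz1 | hz1
    · exfalso
      have ftriv : f = 1 := by
        apply PresentedGroup.ext
        intro i
        fin_cases i
        · exact hx1
        · exact hy1
        · exact hz1
      obtain ⟨g, hg⟩ := hf (ofAdd (1 : ZMod 2))
      rw [ftriv, MonoidHom.one_apply] at hg
      exact absurd hg (by decide)
    · exact hz1
  apply PresentedGroup.ext
  intro i
  fin_cases i
  · show f Xg = f₀ Xg
    rw [hx1, f₀_X]
  · show f Yg = f₀ Yg
    rw [hy1, f₀_Y]
  · show f Zg = f₀ Zg
    rw [hz, f₀_Z]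

end C3

namespace C3
open Multiplicative SemidirectProduct

/-! ### The self-embedding `θ : H →* H` onto the kernel of `pr` -/

abbrev dbl : Multiplicative ℤ →* Multiplicative ℤ :=
  zpowersHom (Multiplicative ℤ) (ofAdd (2 : ℤ))

lemma toAdd_dbl (g : Multiplicative ℤ) : toAdd (dbl g) = toAdd g * 2 := by
  show toAdd (ofAdd (2:ℤ) ^ toAdd g) = toAdd g * 2
  rw [toAdd_zpow, toAdd_ofAdd, smul_eq_mul]

lemma θcompat : ∀ g : Multiplicative ℤ,
    ((inl : Nn →* Hh).comp S.toMonoidHom).comp (φh g).toMonoidHom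
      = (MulAut.conj (((inr : Multiplicative ℤ →* Hh).comp dbl) g)).toMonoidHom.comp
          ((inl : Nn →* Hh).comp S.toMonoidHom) := by
  intro g
  apply MonoidHom.ext
  intro v
  show (inl (S ((M ^ toAdd g) v)) : Hh)
    = inr (dbl g) * inl (S v) * (inr (dbl g))⁻¹
  rw [← map_inv inr, ← inl_aut]
  congr 1
  show S ((M ^ toAdd g) v) = (M ^ toAdd (dbl g)) (S v)
  rw [toAdd_dbl, ← MulAut.mul_apply, ← MulAut.mul_apply, S_M_zpow,
    show (toAdd g) * 2 = 2 * toAdd g from by ring]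

def θ : Hh →* Hh := SemidirectProduct.lift ((inl : Nn →* Hh).comp S.toMonoidHom) ((inr : Multiplicative ℤ →* Hh).comp dbl) θcompat

lemma θ_apply (x : Hh) : θ x = ⟨S x.left, dbl x.right⟩ := by
  conv_lhs => rw [← inl_left_mul_inr_right x]
  rw [map_mul, θ, SemidirectProduct.lift_inl, SemidirectProduct.lift_inr]
  show inl (S x.left) * inr (dbl x.right) = _
  rw [← mk_eq_inl_mul_inr]

lemma S_S (v : Nn) : S (S v) = v := by
  rw [← MulAut.mul_apply, S_mul_S, MulAut.one_apply]

lemma θ_injective : Function.Injective θ := by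
  intro a b h
  rw [θ_apply, θ_apply] at h
  have hl : S a.left = S b.left := congrArg SemidirectProduct.left h
  have hr : dbl a.right = dbl b.right := congrArg SemidirectProduct.right h
  have hl' : a.left = b.left := S.injective hl
  have hr' : a.right = b.right := by
    have := congrArg toAdd hr
    rw [toAdd_dbl, toAdd_dbl] at this
    have : toAdd a.right = toAdd b.right := by omega
    exact toAdd.injective this
  exact SemidirectProduct.ext hl' hr'

lemma θ_range : θ.range = pr.ker := by
  ext x
  constructor
  · rintro ⟨a, rfl⟩
    rw [MonoidHom.mem_ker, pr_apply, θ_apply]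
    show ofAdd ((toAdd (dbl a.right) : ℤ) : ZMod 2) = 1
    rw [toAdd_dbl]
    have h2 : ((toAdd a.right * 2 : ℤ) : ZMod 2) = 0 :=
      (ZMod.intCast_zmod_eq_zero_iff_dvd _ 2).mpr ⟨toAdd a.right, by ring⟩
    rw [h2, ofAdd_zero]
  · intro hx
    rw [MonoidHom.mem_ker, pr_apply] at hx
    have h0 : ((toAdd x.right : ℤ) : ZMod 2) = 0 := by
      have := congrArg toAdd hx
      simpa using this
    obtain ⟨m, hm⟩ := (ZMod.intCast_zmod_eq_zero_iff_dvd _ 2).mp h0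
    refine ⟨⟨S x.left, ofAdd m⟩, ?_⟩
    rw [θ_apply]
    apply SemidirectProduct.ext
    · show S (S x.left) = x.left
      rw [S_S]
    · show dbl (ofAdd m) = x.right
      apply toAdd.injective
      rw [toAdd_dbl, toAdd_ofAdd, hm]
      ring

/-! ### The kernel isomorphism -/

lemma f₀_ker_eq : f₀.ker = Subgroup.comap α pr.ker := (MonoidHom.comap_ker pr α).symm

lemma map_e_ker : Subgroup.map (e : G →* Hh) f₀.ker = pr.ker := by
  have hcoe : (e : G →* Hh) = α := rfl
  rw [f₀_ker_eq, hcoe, Subgroup.map_comap_eq_self_of_surjective α_surjective]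

noncomputable def kernelIso : f₀.ker ≃* G :=
  ((((e.subgroupMap f₀.ker).trans (MulEquiv.subgroupCongr map_e_ker)).trans
    (MulEquiv.subgroupCongr θ_range.symm)).trans
    (MonoidHom.ofInjective θ_injective).symm).trans e.symm

end C3

/-- The tricosm group `G = ⟨X, Y, Z | [X,Y] = 1, Z⁻¹XZ = Y, Z⁻¹YZ = (XY)⁻¹⟩`
admits exactly one surjective homomorphism onto `ℤ/2`, and the kernel of any such
homomorphism (the fundamental group of the corresponding double cover) is
isomorphic to `G` itself. -/
theorem c3_unique_double_cover :
    (∃! f : PresentedGroup c3Rels →* Multiplicative (ZMod 2),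
      Function.Surjective f) ∧
    (∀ f : PresentedGroup c3Rels →* Multiplicative (ZMod 2),
      Function.Surjective f → Nonempty (f.ker ≃* PresentedGroup c3Rels)) := by
  constructor
  · exact ⟨C3.f₀, C3.f₀_surjective, fun f hf => C3.uniq f hf⟩
  · intro f hf
    rw [C3.uniq f hf]
    exact ⟨C3.kernelIso⟩
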